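/- For P(z) = (z − α₁)(z − α₂)(z − α₃) with α₁, α₂, α₃ noncollinear complex numbers, the Steiner inellipse of the triangle α₁α₂α₃ — the ellipse tangent to each side at its midpoint — has its two foci at the zeros of P'(z) (Marden's theorem for simple roots). -/

import Mathlib

noncomputable section

open Complex ComplexConjugate

/-- An ellipse with foci `β₁, β₂` and string length `d` is tangent to the segment
`[p, q]` at its midpoint: the midpoint lies on the ellipse and every other point of
the segment lies strictly outside. -/
def TangentAtMidpoint (β₁ β₂ : ℂ) (d : ℝ) (p q : ℂ) : Prop :=
  ‖(p + q) / 2 - β₁‖ + ‖(p + q) / 2 - β₂‖ = d ∧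
  ∀ z ∈ segment ℝ p q, z ≠ (p + q) / 2 →
    d < ‖z - β₁‖ + ‖z - β₂‖


private lemma im_eq_zero' {x : ℂ} (h : x.re = ‖x‖) : x.im = 0 := by
  have h2 := Complex.sq_norm x
  rw [← h, Complex.normSq_apply] at h2
  nlinarith

private lemma key_identity (u w₁ w₂ : ℂ) (hu : u ≠ 0) (hP : w₁ * w₂ = -(u^2)/12) :
    conj w₂ * u * ((‖w₁‖ : ℝ) : ℂ) = -(conj u * w₁) * ((‖w₂‖ : ℝ) : ℂ) := by
  have hw₁ : w₁ ≠ 0 := by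
    intro h
    apply hu
    have h2 : u ^ 2 = 0 := by linear_combination 12*hP - 12*w₂*h
    exact pow_eq_zero_iff two_ne_zero |>.mp h2
  have hc : conj w₁ ≠ 0 := by simpa using hw₁
  have hPc : conj w₁ * conj w₂ = -((conj u)^2)/12 := by
    rw [← map_mul, hP]; simp [map_div₀, map_ofNat]
  have h1 : w₁ * conj w₁ = ((‖w₁‖ : ℝ) : ℂ)^2 := by
    rw [Complex.mul_conj]; norm_cast; exact (Complex.sq_norm _).symm
  have huu : u * conj u = ((‖u‖ : ℝ) : ℂ)^2 := by
    rw [Complex.mul_conj]; norm_cast; exact (Complex.sq_norm _).symm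
  have hABr : ‖w₁‖ * ‖w₂‖ = ‖u‖ ^ 2 / 12 := by
    rw [← norm_mul, hP]
    simp [map_div₀, map_pow]
  have hAB : ((‖w₁‖ : ℝ) : ℂ) * ((‖w₂‖ : ℝ):ℂ) = ((‖u‖:ℝ):ℂ)^2/12 := by
    norm_cast
  apply mul_right_cancel₀ hc
  linear_combination (u * ((‖w₁‖ : ℝ):ℂ)) * hPc
    + (((‖w₂‖:ℝ):ℂ) * conj u) * h1
    + (((‖w₁‖:ℝ):ℂ) * conj u) * hAB
    - (((‖w₁‖:ℝ):ℂ) * conj u / 12) * huu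

private lemma side_min (u w₁ w₂ : ℂ) (hu : u ≠ 0) (hP : w₁ * w₂ = -(u^2)/12)
    (hnb : ∀ s t : ℝ, w₁ = (s:ℂ)*u → w₂ = (t:ℂ)*u → False)
    (τ : ℝ) (hτ : τ ≠ 0) :
    ‖w₁‖ + ‖w₂‖
      < ‖w₁ + (τ:ℂ)*u‖ + ‖w₂ + (τ:ℂ)*u‖ := by
  have hw₁ : w₁ ≠ 0 := by
    intro h
    apply hu
    have h2 : u ^ 2 = 0 := by linear_combination 12*hP - 12*w₂*h
    exact pow_eq_zero_iff two_ne_zero |>.mp h2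
  have hw₂ : w₂ ≠ 0 := by
    intro h
    apply hu
    have h2 : u ^ 2 = 0 := by linear_combination 12*hP - 12*w₁*h
    exact pow_eq_zero_iff two_ne_zero |>.mp h2
  have h1 : w₁ * conj w₁ = ((‖w₁‖ : ℝ) : ℂ)^2 := by
    rw [Complex.mul_conj]; norm_cast; exact (Complex.sq_norm _).symm
  have h2 : w₂ * conj w₂ = ((‖w₂‖ : ℝ) : ℂ)^2 := by
    rw [Complex.mul_conj]; norm_cast; exact (Complex.sq_norm _).symm
  have huu : u * conj u = ((‖u‖ : ℝ) : ℂ)^2 := by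
    rw [Complex.mul_conj]; norm_cast; exact (Complex.sq_norm _).symm
  have hkey := key_identity u w₁ w₂ hu hP
  set A := ‖w₁‖ with hAdef
  set B := ‖w₂‖ with hBdef
  have hA : 0 < A := norm_pos_iff.mpr hw₁
  have hB : 0 < B := norm_pos_iff.mpr hw₂
  have hR : (conj w₂ * u).re * A = -((conj w₁ * u).re * B) := by
    have h := congrArg Complex.re hkey
    simp only [Complex.mul_re, Complex.ofReal_re, Complex.ofReal_im, Complex.neg_re,
      Complex.neg_im, Complex.conj_re, Complex.conj_im, mul_zero, sub_zero] at h ⊢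
    linear_combination h
  set v₁ : ℂ := w₁ + (τ:ℂ)*u with hv1
  set v₂ : ℂ := w₂ + (τ:ℂ)*u with hv2
  have e₁ : (conj w₁ * v₁).re ≤ A * ‖v₁‖ := by
    calc (conj w₁ * v₁).re ≤ ‖conj w₁ * v₁‖ := Complex.re_le_norm _
    _ = A * ‖v₁‖ := by rw [norm_mul, Complex.norm_conj]
  have e₂ : (conj w₂ * v₂).re ≤ B * ‖v₂‖ := by
    calc (conj w₂ * v₂).re ≤ ‖conj w₂ * v₂‖ := Complex.re_le_norm _
    _ = B * ‖v₂‖ := by rw [norm_mul, Complex.norm_conj]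
  have ec₁ : conj w₁ * v₁ = ((A:ℝ):ℂ)^2 + (τ:ℂ) * (conj w₁ * u) := by
    rw [hv1]; linear_combination h1
  have ec₂ : conj w₂ * v₂ = ((B:ℝ):ℂ)^2 + (τ:ℂ) * (conj w₂ * u) := by
    rw [hv2]; linear_combination h2
  have ex₁ : (conj w₁ * v₁).re = A^2 + τ * (conj w₁ * u).re := by
    rw [ec₁]
    simp [Complex.add_re, Complex.mul_re, Complex.ofReal_re, Complex.ofReal_im,
      ← Complex.ofReal_pow]
  have ex₂ : (conj w₂ * v₂).re = B^2 + τ * (conj w₂ * u).re := by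
    rw [ec₂]
    simp [Complex.add_re, Complex.mul_re, Complex.ofReal_re, Complex.ofReal_im,
      ← Complex.ofReal_pow]
  have hre : B*((conj w₁*v₁).re) + A*((conj w₂*v₂).re) = A*B*(A+B) := by
    rw [ex₁, ex₂]
    linear_combination τ*hR
  by_contra hcon
  push_neg at hcon
  have habs1 : 0 ≤ ‖v₁‖ := norm_nonneg _
  have habs2 : 0 ≤ ‖v₂‖ := norm_nonneg _
  have hh1 := mul_le_mul_of_nonneg_left e₂ hA.le
  have hh2 := mul_le_mul_of_nonneg_left e₁ hB.le
  have hh3 := mul_le_mul_of_nonneg_left hcon (mul_pos hA hB).le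
  have hS1 : (conj w₁ * v₁).re = A * ‖v₁‖ := by nlinarith
  have hS2 : (conj w₂ * v₂).re = B * ‖v₂‖ := by nlinarith
  have him1 : (conj w₁ * v₁).im = 0 := by
    apply im_eq_zero'
    rw [norm_mul, Complex.norm_conj, hS1]
  have him2 : (conj w₂ * v₂).im = 0 := by
    apply im_eq_zero'
    rw [norm_mul, Complex.norm_conj, hS2]
  have hτC : (τ:ℂ) ≠ 0 := Complex.ofReal_ne_zero.mpr hτ
  have ht₁ : (τ:ℂ) * (conj w₁ * u) = (((conj w₁*v₁).re - A^2 : ℝ) : ℂ) := by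
    have hx : conj w₁ * v₁ = (((conj w₁ * v₁).re : ℝ) : ℂ) :=
      Complex.ext (by simp) (by simpa using him1)
    push_cast
    linear_combination hx - ec₁
  have ht₂ : (τ:ℂ) * (conj w₂ * u) = (((conj w₂*v₂).re - B^2 : ℝ) : ℂ) := by
    have hx : conj w₂ * v₂ = (((conj w₂ * v₂).re : ℝ) : ℂ) :=
      Complex.ext (by simp) (by simpa using him2)
    push_cast
    linear_combination hx - ec₂
  have hru1 : conj w₁ * u = ((((conj w₁*v₁).re - A^2)/τ : ℝ):ℂ) := by
    apply mul_left_cancel₀ hτC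
    rw [ht₁, ← Complex.ofReal_mul]
    norm_cast
    field_simp
  have hru2 : conj w₂ * u = ((((conj w₂*v₂).re - B^2)/τ : ℝ):ℂ) := by
    apply mul_left_cancel₀ hτC
    rw [ht₂, ← Complex.ofReal_mul]
    norm_cast
    field_simp
  have hAu : ((‖u‖ : ℝ):ℂ) ≠ 0 := Complex.ofReal_ne_zero.mpr (norm_ne_zero_iff.mpr hu)
  have hmul : ∀ w : ℂ, ∀ r : ℝ, conj w * u = (r:ℂ) → w = (((r/(‖u‖)^2) : ℝ):ℂ) * u := by
    intro w r hr
    have hcu : conj u ≠ 0 := by simpa using hu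
    apply mul_right_cancel₀ hcu
    have hr' : w * conj u = ((r:ℝ):ℂ) := by
      have := congrArg conj hr
      simpa [map_mul, mul_comm] using this
    rw [hr', mul_assoc, mul_comm u (conj u), mul_comm (conj u) u, huu]
    push_cast
    field_simp
  exact hnb _ _ (hmul w₁ _ hru1) (hmul w₂ _ hru2)


private lemma collinear_of_line (a b c : ℂ) (r : ℝ) (h : c = a + (r:ℂ)*(b-a)) :
    Collinear ℝ ({a,b,c} : Set ℂ) := by
  rw [collinear_iff_of_mem (Set.mem_insert a _)]
  refine ⟨b - a, ?_⟩
  rintro p (rfl | rfl | rfl)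
  · exact ⟨0, by simp⟩
  · exact ⟨1, by simp⟩
  · exact ⟨r, by simp [h, Complex.real_smul]; ring⟩

private lemma hnb_of_noncollinear (a b c β₁ β₂ : ℂ)
    (hnc : ¬ Collinear ℝ ({a,b,c} : Set ℂ))
    (hsum : β₁ + β₂ = 2*(a+b+c)/3) :
    ∀ s t : ℝ, (a+b)/2 - β₁ = (s:ℂ)*(b-a) → (a+b)/2 - β₂ = (t:ℂ)*(b-a) → False := by
  intro s t h1 h2
  apply hnc
  apply collinear_of_line a b c (1/2 - 3*(s+t)/2)
  push_cast
  linear_combination (-(3:ℂ)/2)*h1 + (-(3:ℂ)/2)*h2 + (-(3:ℂ)/2)*hsum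

private lemma prod_rel (a b c β₁ β₂ : ℂ)
    (hsum : β₁ + β₂ = 2*(a+b+c)/3) (hprod : β₁*β₂ = (a*b+a*c+b*c)/3) :
    ((a+b)/2 - β₁) * ((a+b)/2 - β₂) = -((b-a)^2)/12 := by
  linear_combination (-(a+b)/2)*hsum + hprod

private lemma tangent_side (a b c β₁ β₂ : ℂ)
    (hnc : ¬ Collinear ℝ ({a,b,c} : Set ℂ))
    (hsum : β₁ + β₂ = 2*(a+b+c)/3)
    (hprod : β₁*β₂ = (a*b+a*c+b*c)/3) :
    TangentAtMidpoint β₁ β₂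
      (‖(a+b)/2 - β₁‖ + ‖(a+b)/2 - β₂‖) a b := by
  have hab : a ≠ b := by
    intro h
    apply hnc
    rw [h]
    simp only [Set.insert_comm, Set.insert_idem]
    exact collinear_pair ℝ b c
  have hu : b - a ≠ 0 := sub_ne_zero.2 hab.symm
  have hP := prod_rel a b c β₁ β₂ hsum hprod
  have hnb := hnb_of_noncollinear a b c β₁ β₂ hnc hsum
  constructor
  · rfl
  · rintro z ⟨p, q, hp, hq, hpq, rfl⟩ hne
    have hpqC : (p:ℂ) + (q:ℂ) = 1 := by exact_mod_cast hpq
    set τ : ℝ := q - 1/2 with hτdef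
    have hτC : (τ:ℂ) = (q:ℂ) - 1/2 := by rw [hτdef]; push_cast; ring
    have hz1 : p • a + q • b - β₁ = ((a+b)/2 - β₁) + (τ:ℂ)*(b-a) := by
      simp only [Complex.real_smul]
      push_cast
      linear_combination a*hpqC - (b-a)*hτC
    have hz2 : p • a + q • b - β₂ = ((a+b)/2 - β₂) + (τ:ℂ)*(b-a) := by
      simp only [Complex.real_smul]
      push_cast
      linear_combination a*hpqC - (b-a)*hτC
    have hτ : τ ≠ 0 := by
      intro h
      apply hne
      have : (τ:ℂ) = 0 := by exact_mod_cast h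
      have := hz1
      rw [‹(τ:ℂ) = 0›, zero_mul, add_zero] at this
      have : p • a + q • b - β₁ - ((a+b)/2 - β₁) = 0 := by rw [this]; ring
      have h2 : p • a + q • b = (a+b)/2 := by linear_combination this
      exact h2
    rw [hz1, hz2]
    exact side_min (b-a) _ _ hu hP hnb τ hτ

noncomputable def Dsq (a b c : ℂ) : ℝ :=
  (Complex.normSq (a+b-c-c))/18 + (Complex.normSq (b-a))/6
    + 2*‖a^2+b^2+c^2-a*b-a*c-b*c‖/9

private lemma dsq_eq (a b c β₁ β₂ : ℂ)
    (hsum : β₁ + β₂ = 2*(a+b+c)/3)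
    (hprod : β₁*β₂ = (a*b+a*c+b*c)/3) :
    (‖(a+b)/2 - β₁‖ + ‖(a+b)/2 - β₂‖)^2 = Dsq a b c := by
  set w₁ : ℂ := (a+b)/2 - β₁ with hw1
  set w₂ : ℂ := (a+b)/2 - β₂ with hw2
  have hP : w₁ * w₂ = -((b-a)^2)/12 := prod_rel a b c β₁ β₂ hsum hprod
  have hS : w₁ + w₂ = (a+b-c-c)/3 := by rw [hw1, hw2]; linear_combination -hsum
  have hA2 : ‖w₁‖ ^ 2 = Complex.normSq w₁ := Complex.sq_norm _
  have hB2 : ‖w₂‖ ^ 2 = Complex.normSq w₂ := Complex.sq_norm _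
  have hABv : ‖w₁‖ * ‖w₂‖ = Complex.normSq (b-a)/12 := by
    rw [← norm_mul, hP]
    simp [map_div₀, map_pow, ← Complex.sq_norm]
  have hpar : Complex.normSq w₁ + Complex.normSq w₂
      = (Complex.normSq (w₁+w₂) + Complex.normSq (w₁-w₂))/2 := by
    simp [Complex.normSq_apply]; ring
  have hSn : Complex.normSq (w₁+w₂) = Complex.normSq (a+b-c-c)/9 := by
    rw [hS, map_div₀]
    norm_num
  have hd : (w₁-w₂)^2 = ((4:ℂ)/9) * (a^2+b^2+c^2-a*b-a*c-b*c) := by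
    linear_combination (w₁+w₂+(a+b-c-c)/3)*hS - 4*hP
  have h2 : Complex.normSq (w₁-w₂) = 4/9 * ‖a^2+b^2+c^2-a*b-a*c-b*c‖ := by
    rw [← Complex.sq_norm, ← norm_pow, hd, norm_mul]
    norm_num [map_div₀]
  calc (‖w₁‖ + ‖w₂‖)^2
      = Complex.normSq w₁ + Complex.normSq w₂ + 2*(‖w₁‖ * ‖w₂‖) := by
        rw [← hA2, ← hB2]; ring
    _ = (Complex.normSq (w₁+w₂) + Complex.normSq (w₁-w₂))/2 + 2*(Complex.normSq (b-a)/12) := by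
        rw [hpar, hABv]
    _ = Dsq a b c := by
        rw [hSn, h2, Dsq]
        ring

private lemma Dsq_rot (a b c : ℂ) : Dsq a b c = Dsq b c a := by
  unfold Dsq
  have h3 : (b^2+c^2+a^2-b*c-b*a-c*a) = (a^2+b^2+c^2-a*b-a*c-b*c) := by ring
  rw [h3]
  simp only [Complex.normSq_apply, Complex.sub_re, Complex.sub_im, Complex.add_re,
    Complex.add_im]
  ring


/-- Marden's theorem for `P(z) = (z−α₁)(z−α₂)(z−α₃)` with noncollinear roots: the
Steiner inellipse of the triangle `α₁α₂α₃`, i.e. the ellipse tangent to each side at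
its midpoint, has its foci at the zeros `β₁, β₂` of `P'`. -/

theorem marden_simple_roots
    (α₁ α₂ α₃ β₁ β₂ : ℂ)
    (hnc : ¬ Collinear ℝ ({α₁, α₂, α₃} : Set ℂ))
    (hβ : ∀ z : ℂ, 3 * z ^ 2 - 2 * (α₁ + α₂ + α₃) * z + (α₁ * α₂ + α₁ * α₃ + α₂ * α₃)
        = 3 * (z - β₁) * (z - β₂)) :
    ∃ d : ℝ, ‖β₁ - β₂‖ < d ∧
      TangentAtMidpoint β₁ β₂ d α₁ α₂ ∧
      TangentAtMidpoint β₁ β₂ d α₂ α₃ ∧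
      TangentAtMidpoint β₁ β₂ d α₃ α₁ := by
  have hsum : β₁ + β₂ = 2*(α₁+α₂+α₃)/3 := by linear_combination (hβ 1 - hβ 0)/3
  have hprod : β₁*β₂ = (α₁*α₂+α₁*α₃+α₂*α₃)/3 := by linear_combination -(hβ 0)/3
  have hset₂ : ({α₂, α₃, α₁} : Set ℂ) = {α₁, α₂, α₃} := by
    ext x; simp only [Set.mem_insert_iff, Set.mem_singleton_iff]; tauto
  have hset₃ : ({α₃, α₁, α₂} : Set ℂ) = {α₁, α₂, α₃} := by
    ext x; simp only [Set.mem_insert_iff, Set.mem_singleton_iff]; tauto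
  have hnc₂ : ¬ Collinear ℝ ({α₂, α₃, α₁} : Set ℂ) := by rw [hset₂]; exact hnc
  have hnc₃ : ¬ Collinear ℝ ({α₃, α₁, α₂} : Set ℂ) := by rw [hset₃]; exact hnc
  have hsum₂ : β₁ + β₂ = 2*(α₂+α₃+α₁)/3 := by linear_combination hsum
  have hsum₃ : β₁ + β₂ = 2*(α₃+α₁+α₂)/3 := by linear_combination hsum
  have hprod₂ : β₁*β₂ = (α₂*α₃+α₂*α₁+α₃*α₁)/3 := by linear_combination hprod
  have hprod₃ : β₁*β₂ = (α₃*α₁+α₃*α₂+α₁*α₂)/3 := by linear_combination hprod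
  have T₁ := tangent_side α₁ α₂ α₃ β₁ β₂ hnc hsum hprod
  have T₂ := tangent_side α₂ α₃ α₁ β₁ β₂ hnc₂ hsum₂ hprod₂
  have T₃ := tangent_side α₃ α₁ α₂ β₁ β₂ hnc₃ hsum₃ hprod₃
  set d : ℝ := ‖(α₁+α₂)/2 - β₁‖ + ‖(α₁+α₂)/2 - β₂‖ with hd
  set d₂ : ℝ := ‖(α₂+α₃)/2 - β₁‖ + ‖(α₂+α₃)/2 - β₂‖ with hd₂
  set d₃ : ℝ := ‖(α₃+α₁)/2 - β₁‖ + ‖(α₃+α₁)/2 - β₂‖ with hd₃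
  have hde₁ := dsq_eq α₁ α₂ α₃ β₁ β₂ hsum hprod
  have hde₂ := dsq_eq α₂ α₃ α₁ β₁ β₂ hsum₂ hprod₂
  have hde₃ := dsq_eq α₃ α₁ α₂ β₁ β₂ hsum₃ hprod₃
  have hr₂ := Dsq_rot α₁ α₂ α₃
  have hr₃ := Dsq_rot α₂ α₃ α₁
  rw [← hd] at hde₁
  rw [← hd₂] at hde₂
  rw [← hd₃] at hde₃
  have hdnn : 0 ≤ d := by positivity
  have hdnn₂ : 0 ≤ d₂ := by positivity
  have hdnn₃ : 0 ≤ d₃ := by positivity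
  have hsq : ∀ x y : ℝ, 0 ≤ x → 0 ≤ y → x^2 = y^2 → x = y := by
    intro x y hx hy hxy
    nlinarith [sq_nonneg (x - y), sq_nonneg (x + y)]
  have hd2d : d₂ = d := hsq _ _ hdnn₂ hdnn (by rw [hde₁, hde₂, hr₂])
  have hd3d : d₃ = d := hsq _ _ hdnn₃ hdnn (by rw [hde₁, hde₃, hr₂, hr₃])
  rw [hd2d] at T₂
  rw [hd3d] at T₃
  refine ⟨d, ?_, T₁, T₂, T₃⟩
  -- strict focal inequality
  have htri : ‖β₁ - β₂‖ ≤ d := by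
    have h0 : ‖β₁ - β₂‖
        ≤ ‖(α₁+α₂)/2 - β₂‖ + ‖(α₁+α₂)/2 - β₁‖ := by
      rw [show β₁ - β₂ = ((α₁+α₂)/2 - β₂) - ((α₁+α₂)/2 - β₁) by ring]
      simpa using norm_sub_le ((α₁+α₂)/2 - β₂) ((α₁+α₂)/2 - β₁)
    rw [hd]
    linarith
  rcases lt_or_ge (‖β₁ - β₂‖) d with h | h
  · exact h
  exfalso
  have heq : ‖β₁ - β₂‖ = d := le_antisymm htri h
  -- each midpoint lies on the segment [β₁, β₂]
  have hseg : ∀ m : ℂ, ‖m - β₁‖ + ‖m - β₂‖ = d →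
      ∃ q : ℝ, m = β₁ + (q:ℂ) * (β₂ - β₁) := by
    intro m hm
    have hdist : dist β₁ m + dist m β₂ = dist β₁ β₂ := by
      rw [Complex.dist_eq, Complex.dist_eq, Complex.dist_eq, norm_sub_rev β₁ m]
      rw [hm, heq]
    have hW : Wbtw ℝ β₁ m β₂ := dist_add_dist_eq_iff.mp hdist
    have hm' : m ∈ segment ℝ β₁ β₂ := by rwa [mem_segment_iff_wbtw]
    obtain ⟨p, q, hp, hq, hpq, hme⟩ := hm'
    refine ⟨q, ?_⟩
    have hpqC : (p:ℂ) + (q:ℂ) = 1 := by exact_mod_cast hpq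
    have : (p:ℂ)*β₁ + (q:ℂ)*β₂ = m := by
      rw [← hme]; simp [Complex.real_smul]
    linear_combination -this + β₁*hpqC
  obtain ⟨q₁, hm₁⟩ := hseg ((α₁+α₂)/2) T₁.1
  obtain ⟨q₂, hm₂⟩ := hseg ((α₂+α₃)/2) T₂.1
  obtain ⟨q₃, hm₃⟩ := hseg ((α₃+α₁)/2) T₃.1
  apply hnc
  rw [collinear_iff_of_mem (Set.mem_insert α₁ _)]
  refine ⟨β₂ - β₁, ?_⟩
  rintro p (rfl | rfl | rfl)
  · exact ⟨0, by simp⟩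
  · refine ⟨2*(q₂ - q₃), ?_⟩
    simp only [Complex.real_smul, vadd_eq_add]
    push_cast
    linear_combination 2*hm₂ - 2*hm₃
  · refine ⟨2*(q₂ - q₁), ?_⟩
    simp only [Complex.real_smul, vadd_eq_add]
    push_cast
    linear_combination 2*hm₂ - 2*hm₁
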